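/- With the definitions below, for every r ∈ (0, R₄) with r ≠ R₃ the function f is twice differentiable at r with f′(r) = φ(r)·g(r), and f″(r) ≤ −f′(r)·((2/D²)·(r·κ(r) + A) + 8M̃/D) − (η/4)·f(r) − (ξ/4)·f(r)·1_{r<R₃}. -/

import Mathlib

/-- `κ*(r) = max(κ(r), A)`. -/
noncomputable def kstar2 (κ : ℝ → ℝ) (A r : ℝ) : ℝ := max (κ r) A

/-- `h(r) = (2/D²) ∫₀ʳ (s·κ*(s) + A) ds + (8M̃/D)·r`. -/
noncomputable def hfun (κ : ℝ → ℝ) (A D Mt r : ℝ) : ℝ :=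
  2 / D ^ 2 * (∫ s in (0:ℝ)..r, (s * kstar2 κ A s + A)) + 8 * Mt / D * r

/-- `φ(r) = exp(−h(r))`. -/
noncomputable def phi2 (κ : ℝ → ℝ) (A D Mt r : ℝ) : ℝ :=
  Real.exp (-(hfun κ A D Mt r))

/-- `Φ(r) = ∫₀ʳ φ(s) ds`. -/
noncomputable def Phi2 (κ : ℝ → ℝ) (A D Mt r : ℝ) : ℝ :=
  ∫ s in (0:ℝ)..r, phi2 κ A D Mt s

/-- `η = (∫₀^{R₄} Φ(s) φ(s)⁻¹ ds)⁻¹`. -/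
noncomputable def eta (κ : ℝ → ℝ) (A D Mt R₄ : ℝ) : ℝ :=
  (∫ s in (0:ℝ)..R₄, Phi2 κ A D Mt s * (phi2 κ A D Mt s)⁻¹)⁻¹

/-- `ξ = (∫₀^{R₃} Φ(s) φ(s)⁻¹ ds)⁻¹`. -/
noncomputable def xiC (κ : ℝ → ℝ) (A D Mt R₃ : ℝ) : ℝ :=
  (∫ s in (0:ℝ)..R₃, Phi2 κ A D Mt s * (phi2 κ A D Mt s)⁻¹)⁻¹

/-- `g(r) = 1 − (η/4) ∫₀^{r∧R₄} Φφ⁻¹ − (ξ/4) ∫₀^{r∧R₃} Φφ⁻¹`. -/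
noncomputable def gfun2 (κ : ℝ → ℝ) (A D Mt R₃ R₄ r : ℝ) : ℝ :=
  1 - eta κ A D Mt R₄ / 4 * (∫ s in (0:ℝ)..(min r R₄), Phi2 κ A D Mt s * (phi2 κ A D Mt s)⁻¹)
    - xiC κ A D Mt R₃ / 4 * (∫ s in (0:ℝ)..(min r R₃), Phi2 κ A D Mt s * (phi2 κ A D Mt s)⁻¹)

/-- `f(r) = ∫₀^{r∧R₄} φ(s)·g(s) ds`. -/
noncomputable def ffun2 (κ : ℝ → ℝ) (A D Mt R₃ R₄ r : ℝ) : ℝ :=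
  ∫ s in (0:ℝ)..(min r R₄), phi2 κ A D Mt s * gfun2 κ A D Mt R₃ R₄ s


/-!
On `(0, R₄)` away from `R₃` each truncation `min · R` is locally the identity or a constant, so
the fundamental theorem of calculus gives `f' = φ g` and
`f'' = φ' g + φ g' = -h' φ g - (η/4) Φ - (ξ/4) Φ 1_{r<R₃}`, because `φ · Φ φ⁻¹ = Φ`.
Since `Φ φ⁻¹ ≥ 0`, we have `0 ≤ η ∫₀^{r∧R₄} Φ φ⁻¹ ≤ 1`, and likewise for `ξ`, so `1/2 ≤ g ≤ 1`.
Hence `φ g ≥ 0`, so `κ*`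
in `h'` may be replaced by `κ ≤ κ*`, and `f ≤ Φ`, so `Φ` may be replaced by `f`.
-/

open Set MeasureTheory intervalIntegral Filter Topology

section Primitive

variable {F : ℝ → ℝ}

lemma intervalIntegrable_of_continuousOn_Ici (hF : ContinuousOn F (Ici 0)) {b : ℝ} (hb : 0 ≤ b) :
    IntervalIntegrable F volume 0 b :=
  (hF.mono (by rw [uIcc_of_le hb]; exact Icc_subset_Ici_self)).intervalIntegrable

lemma continuousOn_primitive_of_continuousOn_Ici (hF : ContinuousOn F (Ici 0)) :
    ContinuousOn (fun u => ∫ s in (0:ℝ)..u, F s) (Ici 0) := by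
  intro x hx
  have hIcc : uIcc (0:ℝ) (x + 1) = Icc 0 (x + 1) := uIcc_of_le (by linarith [mem_Ici.1 hx])
  have hcont : ContinuousOn (fun u => ∫ s in (0:ℝ)..u, F s) (Icc 0 (x + 1)) := by
    rw [← hIcc]
    exact continuousOn_primitive_interval (hIcc ▸ (hF.mono Icc_subset_Ici_self).integrableOn_Icc)
  have hnhds : Icc 0 (x + 1) ∈ 𝓝[Ici 0] x := by
    rw [← Ici_inter_Iic]
    exact inter_mem_nhdsWithin _ (Iic_mem_nhds (by linarith))
  exact (hcont x ⟨hx, by linarith⟩).mono_of_mem_nhdsWithin hnhds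

lemma hasDerivAt_primitive_of_continuousOn_Ici (hF : ContinuousOn F (Ici 0)) {r : ℝ}
    (hr : 0 < r) : HasDerivAt (fun u => ∫ s in (0:ℝ)..u, F s) (F r) r :=
  integral_hasDerivAt_right (intervalIntegrable_of_continuousOn_Ici hF hr.le)
    ((hF.mono Ioi_subset_Ici_self).stronglyMeasurableAtFilter isOpen_Ioi r hr)
    (hF.continuousAt (Ici_mem_nhds hr))

lemma hasDerivAt_primitive_min (hF : ContinuousOn F (Ici 0)) {b r : ℝ} (hr : 0 < r)
    (hrb : r ≠ b) :
    HasDerivAt (fun u => ∫ s in (0:ℝ)..min u b, F s) (if r < b then F r else 0) r := by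
  rcases hrb.lt_or_gt with hlt | hgt
  · rw [if_pos hlt]
    refine (hasDerivAt_primitive_of_continuousOn_Ici hF hr).congr_of_eventuallyEq ?_
    filter_upwards [Iio_mem_nhds hlt] with u hu
    rw [min_eq_left hu.le]
  · rw [if_neg (not_lt.2 hgt.le)]
    refine (hasDerivAt_const r (∫ s in (0:ℝ)..b, F s)).congr_of_eventuallyEq ?_
    filter_upwards [Ioi_mem_nhds hgt] with u hu
    rw [min_eq_right hu.le]

lemma inv_integral_mul_integral_min_le_one (hF : ContinuousOn F (Ici 0))
    (hF0 : ∀ s, 0 ≤ s → 0 ≤ F s) {b r : ℝ} (hb : 0 ≤ b) (hr : 0 ≤ r) :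
    (∫ s in (0:ℝ)..b, F s)⁻¹ * ∫ s in (0:ℝ)..min r b, F s ≤ 1 := by
  have hmono : ∫ s in (0:ℝ)..min r b, F s ≤ ∫ s in (0:ℝ)..b, F s :=
    integral_mono_interval le_rfl (le_min hr hb) (min_le_right r b)
      ((ae_restrict_iff' measurableSet_Ioc).2 (Eventually.of_forall fun s hs => hF0 s hs.1.le))
      (intervalIntegrable_of_continuousOn_Ici hF hb)
  exact inv_mul_le_one_of_le₀ hmono (integral_nonneg hb fun s hs => hF0 s hs.1)

end Primitive

section Profile

variable {κ : ℝ → ℝ} {A D Mt R₃ R₄ r : ℝ}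

lemma continuousOn_kstar2_integrand (hκc : ContinuousOn κ (Ici 0)) :
    ContinuousOn (fun s => s * kstar2 κ A s + A) (Ici 0) :=
  (continuousOn_id.mul (hκc.sup continuousOn_const)).add continuousOn_const

lemma hasDerivAt_hfun (hκc : ContinuousOn κ (Ici 0)) (hr : 0 < r) :
    HasDerivAt (hfun κ A D Mt) (2 / D ^ 2 * (r * kstar2 κ A r + A) + 8 * Mt / D) r := by
  have hprim := hasDerivAt_primitive_of_continuousOn_Ici (continuousOn_kstar2_integrand (A := A) hκc) hr
  exact ((hprim.const_mul (2 / D ^ 2)).add ((hasDerivAt_id r).const_mul (8 * Mt / D))).congr_deriv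
    (by simp)

lemma hasDerivAt_phi2 (hκc : ContinuousOn κ (Ici 0)) (hr : 0 < r) :
    HasDerivAt (phi2 κ A D Mt)
      (phi2 κ A D Mt r * -(2 / D ^ 2 * (r * kstar2 κ A r + A) + 8 * Mt / D)) r :=
  (hasDerivAt_hfun hκc hr).neg.exp

lemma continuousOn_phi2 (hκc : ContinuousOn κ (Ici 0)) : ContinuousOn (phi2 κ A D Mt) (Ici 0) :=
  Real.continuous_exp.comp_continuousOn
    ((continuousOn_const.mul (continuousOn_primitive_of_continuousOn_Ici
      (continuousOn_kstar2_integrand hκc))).add (continuousOn_const.mul continuousOn_id)).neg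

lemma phi2_pos : 0 < phi2 κ A D Mt r := Real.exp_pos _

lemma Phi2_mul_inv_phi2_nonneg (hr : 0 ≤ r) : 0 ≤ Phi2 κ A D Mt r * (phi2 κ A D Mt r)⁻¹ :=
  mul_nonneg (integral_nonneg hr fun _ _ => phi2_pos.le) (inv_nonneg.2 phi2_pos.le)

lemma continuousOn_Phi2_mul_inv_phi2 (hκc : ContinuousOn κ (Ici 0)) :
    ContinuousOn (fun s => Phi2 κ A D Mt s * (phi2 κ A D Mt s)⁻¹) (Ici 0) :=
  (continuousOn_primitive_of_continuousOn_Ici (continuousOn_phi2 hκc)).mul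
    ((continuousOn_phi2 hκc).inv₀ fun _ _ => phi2_pos.ne')

lemma eta_nonneg (hR₄ : 0 ≤ R₄) : 0 ≤ eta κ A D Mt R₄ :=
  inv_nonneg.2 (integral_nonneg hR₄ fun _ hs => Phi2_mul_inv_phi2_nonneg hs.1)

lemma xiC_nonneg (hR₃ : 0 ≤ R₃) : 0 ≤ xiC κ A D Mt R₃ := eta_nonneg hR₃

lemma gfun2_le_one (hR₃ : 0 ≤ R₃) (hR₄ : 0 ≤ R₄) (hr : 0 ≤ r) :
    gfun2 κ A D Mt R₃ R₄ r ≤ 1 := by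
  have hJ : ∀ {R}, 0 ≤ R →
      0 ≤ ∫ s in (0:ℝ)..min r R, Phi2 κ A D Mt s * (phi2 κ A D Mt s)⁻¹ := fun hR =>
    integral_nonneg (le_min hr hR) fun _ hs => Phi2_mul_inv_phi2_nonneg hs.1
  have hη : 0 ≤ eta κ A D Mt R₄ := eta_nonneg hR₄
  have hξ : 0 ≤ xiC κ A D Mt R₃ := xiC_nonneg hR₃
  unfold gfun2
  linarith [mul_nonneg hη (hJ hR₄), mul_nonneg hξ (hJ hR₃)]

lemma half_le_gfun2 (hκc : ContinuousOn κ (Ici 0)) (hR₃ : 0 ≤ R₃) (hR₄ : 0 ≤ R₄) (hr : 0 ≤ r) :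
    1 / 2 ≤ gfun2 κ A D Mt R₃ R₄ r := by
  have hle : ∀ {R}, 0 ≤ R → (∫ s in (0:ℝ)..R, Phi2 κ A D Mt s * (phi2 κ A D Mt s)⁻¹)⁻¹ *
      ∫ s in (0:ℝ)..min r R, Phi2 κ A D Mt s * (phi2 κ A D Mt s)⁻¹ ≤ 1 := fun hR =>
    inv_integral_mul_integral_min_le_one (continuousOn_Phi2_mul_inv_phi2 hκc)
      (fun _ => Phi2_mul_inv_phi2_nonneg) hR hr
  unfold gfun2 eta xiC
  linarith [hle hR₃, hle hR₄]

lemma continuousOn_gfun2 (hκc : ContinuousOn κ (Ici 0)) (hR₃ : 0 ≤ R₃) (hR₄ : 0 ≤ R₄) :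
    ContinuousOn (gfun2 κ A D Mt R₃ R₄) (Ici 0) := by
  have hJ : ∀ {R}, 0 ≤ R → ContinuousOn (fun r => ∫ s in (0:ℝ)..min r R,
      Phi2 κ A D Mt s * (phi2 κ A D Mt s)⁻¹) (Ici 0) := fun hR =>
    (continuousOn_primitive_of_continuousOn_Ici (continuousOn_Phi2_mul_inv_phi2 hκc)).comp
      (continuous_id.min continuous_const).continuousOn fun _ hx => le_min hx hR
  exact (continuousOn_const.sub (continuousOn_const.mul (hJ hR₄))).sub
    (continuousOn_const.mul (hJ hR₃))

lemma continuousOn_phi2_mul_gfun2 (hκc : ContinuousOn κ (Ici 0)) (hR₃ : 0 ≤ R₃) (hR₄ : 0 ≤ R₄) :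
    ContinuousOn (fun s => phi2 κ A D Mt s * gfun2 κ A D Mt R₃ R₄ s) (Ici 0) :=
  (continuousOn_phi2 hκc).mul (continuousOn_gfun2 hκc hR₃ hR₄)

lemma ffun2_le_Phi2 (hκc : ContinuousOn κ (Ici 0)) (hR₃ : 0 ≤ R₃) (hR₄ : 0 ≤ R₄) (hr : 0 ≤ r)
    (hr₄ : r ≤ R₄) : ffun2 κ A D Mt R₃ R₄ r ≤ Phi2 κ A D Mt r := by
  unfold ffun2 Phi2
  rw [min_eq_left hr₄]
  exact integral_mono_on hr
    (intervalIntegrable_of_continuousOn_Ici (continuousOn_phi2_mul_gfun2 hκc hR₃ hR₄) hr)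
    (intervalIntegrable_of_continuousOn_Ici (continuousOn_phi2 hκc) hr)
    fun s hs => mul_le_of_le_one_right phi2_pos.le (gfun2_le_one hR₃ hR₄ hs.1)

lemma hasDerivAt_ffun2 (hκc : ContinuousOn κ (Ici 0)) (hR₃ : 0 ≤ R₃) (hr : 0 < r)
    (hr₄ : r < R₄) :
    HasDerivAt (ffun2 κ A D Mt R₃ R₄) (phi2 κ A D Mt r * gfun2 κ A D Mt R₃ R₄ r) r := by
  have h := hasDerivAt_primitive_min
    (continuousOn_phi2_mul_gfun2 (A := A) (D := D) (Mt := Mt) hκc hR₃ (hr.trans hr₄).le) hr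
    hr₄.ne
  rwa [if_pos hr₄] at h

lemma hasDerivAt_gfun2 (hκc : ContinuousOn κ (Ici 0)) (hr : 0 < r) (hr₃ : r ≠ R₃)
    (hr₄ : r < R₄) :
    HasDerivAt (gfun2 κ A D Mt R₃ R₄)
      (-(eta κ A D Mt R₄ / 4 * (Phi2 κ A D Mt r * (phi2 κ A D Mt r)⁻¹))
        - xiC κ A D Mt R₃ / 4 *
          (if r < R₃ then Phi2 κ A D Mt r * (phi2 κ A D Mt r)⁻¹ else 0)) r := by
  have hG := continuousOn_Phi2_mul_inv_phi2 (A := A) (D := D) (Mt := Mt) hκc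
  have h₄ := hasDerivAt_primitive_min hG hr hr₄.ne
  rw [if_pos hr₄] at h₄
  exact ((h₄.const_mul _).const_sub 1).sub ((hasDerivAt_primitive_min hG hr hr₃).const_mul _)

lemma hasDerivAt_phi2_mul_gfun2 (hκc : ContinuousOn κ (Ici 0)) (hr : 0 < r) (hr₃ : r ≠ R₃)
    (hr₄ : r < R₄) :
    HasDerivAt (fun x => phi2 κ A D Mt x * gfun2 κ A D Mt R₃ R₄ x)
      (-(phi2 κ A D Mt r * gfun2 κ A D Mt R₃ R₄ r)
          * (2 / D ^ 2 * (r * kstar2 κ A r + A) + 8 * Mt / D)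
        - eta κ A D Mt R₄ / 4 * Phi2 κ A D Mt r
        - xiC κ A D Mt R₃ / 4 * Phi2 κ A D Mt r * (if r < R₃ then (1:ℝ) else 0)) r := by
  refine ((hasDerivAt_phi2 hκc hr).mul (hasDerivAt_gfun2 hκc hr hr₃ hr₄)).congr_deriv ?_
  have hφ : phi2 κ A D Mt r ≠ 0 := phi2_pos.ne'
  split_ifs <;> field_simp <;> ring

end Profile

theorem f2_second_derivative_inequality_general
    (κ : ℝ → ℝ) (A D Mt R₃ R₄ : ℝ)
    (hR₃ : 0 < R₃) (hR₃₄ : R₃ < R₄)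
    (hκc : ContinuousOn κ (Set.Ici 0)) :
    ∀ r, 0 < r → r < R₄ → r ≠ R₃ →
      HasDerivAt (ffun2 κ A D Mt R₃ R₄) (phi2 κ A D Mt r * gfun2 κ A D Mt R₃ R₄ r) r ∧
      DifferentiableAt ℝ (deriv (ffun2 κ A D Mt R₃ R₄)) r ∧
      deriv (deriv (ffun2 κ A D Mt R₃ R₄)) r ≤
        -(phi2 κ A D Mt r * gfun2 κ A D Mt R₃ R₄ r)
            * (2 / D ^ 2 * (r * κ r + A) + 8 * Mt / D)
          - eta κ A D Mt R₄ / 4 * ffun2 κ A D Mt R₃ R₄ r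
          - xiC κ A D Mt R₃ / 4 * ffun2 κ A D Mt R₃ R₄ r
              * (if r < R₃ then (1:ℝ) else 0) := by
  intro r hr hr₄ hr₃
  have hR₄ : 0 < R₄ := hR₃.trans hR₃₄
  have hf' : deriv (ffun2 κ A D Mt R₃ R₄) =ᶠ[𝓝 r]
      fun x => phi2 κ A D Mt x * gfun2 κ A D Mt R₃ R₄ x := by
    filter_upwards [Ioo_mem_nhds hr hr₄] with x hx
    exact (hasDerivAt_ffun2 hκc hR₃.le hx.1 hx.2).deriv
  have hf'' := hasDerivAt_phi2_mul_gfun2 (A := A) (D := D) (Mt := Mt) hκc hr hr₃ hr₄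
  refine ⟨hasDerivAt_ffun2 hκc hR₃.le hr hr₄, hf'.differentiableAt_iff.2 hf''.differentiableAt, ?_⟩
  rw [hf'.deriv_eq, hf''.deriv]
  have hg : 1 / 2 ≤ gfun2 κ A D Mt R₃ R₄ r := half_le_gfun2 hκc hR₃.le hR₄.le hr.le
  have hφg : 0 ≤ phi2 κ A D Mt r * gfun2 κ A D Mt R₃ R₄ r := mul_nonneg phi2_pos.le (by linarith)
  have hκ : 2 / D ^ 2 * (r * κ r) ≤ 2 / D ^ 2 * (r * kstar2 κ A r) := by
    gcongr
    exact le_max_left _ _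
  have hfΦ : ffun2 κ A D Mt R₃ R₄ r ≤ Phi2 κ A D Mt r :=
    ffun2_le_Phi2 hκc hR₃.le hR₄.le hr.le hr₄.le
  have hη : 0 ≤ eta κ A D Mt R₄ := eta_nonneg hR₄.le
  have hξ : 0 ≤ xiC κ A D Mt R₃ * if r < R₃ then 1 else 0 :=
    mul_nonneg (xiC_nonneg hR₃.le) (by split_ifs <;> norm_num)
  linarith [mul_le_mul_of_nonneg_left hκ hφg, mul_le_mul_of_nonneg_left hfΦ hη,
    mul_le_mul_of_nonneg_left hfΦ hξ]

/-- The second-derivative inequality (f''-contraction2): for `0 < r < R₄`,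
`r ≠ R₃`, `f` is twice differentiable at `r` with `f′(r) = φ(r)g(r)` and
`f″(r) ≤ −f′(r)((2/D²)(rκ(r)+A) + 8M̃/D) − (η/4)f(r) − (ξ/4)f(r)·1_{r<R₃}`. -/
theorem f2_second_derivative_inequality
    (κ : ℝ → ℝ) (A D Mt R₃ R₄ : ℝ)
    (hA : 0 ≤ A) (hD : 0 < D) (hMt : 0 ≤ Mt)
    (hR₃ : 0 < R₃) (hR₃₄ : R₃ < R₄)
    (hκc : ContinuousOn κ (Set.Ici 0))
    (hκb : ∃ C, ∀ r, 0 ≤ r → |κ r| ≤ C) :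
    ∀ r, 0 < r → r < R₄ → r ≠ R₃ →
      HasDerivAt (ffun2 κ A D Mt R₃ R₄) (phi2 κ A D Mt r * gfun2 κ A D Mt R₃ R₄ r) r ∧
      DifferentiableAt ℝ (deriv (ffun2 κ A D Mt R₃ R₄)) r ∧
      deriv (deriv (ffun2 κ A D Mt R₃ R₄)) r ≤
        -(phi2 κ A D Mt r * gfun2 κ A D Mt R₃ R₄ r)
            * (2 / D ^ 2 * (r * κ r + A) + 8 * Mt / D)
          - eta κ A D Mt R₄ / 4 * ffun2 κ A D Mt R₃ R₄ r
          - xiC κ A D Mt R₃ / 4 * ffun2 κ A D Mt R₃ R₄ r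
              * (if r < R₃ then (1:ℝ) else 0) :=
  f2_second_derivative_inequality_general κ A D Mt R₃ R₄ hR₃ hR₃₄ hκc
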